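/- arXiv:2207.08231 — 3 statements merged into one kernel-verified Lean document; each statement's English description precedes it below -/
import Mathlib

section
/- Let Φ = f₁ ∘ f₂⁻¹ : S_n → S_n. Then for every permutation σ ∈ S_n, the reverse of Φ(σ) in one-line notation equals the one-line notation of σ⁻¹; equivalently, Φ(σ)[i] = σ⁻¹[n+1−i] for all i ∈ {1,…,n}. -/
/-- `IsWord n w` : `w` encodes a word in `[1] × [2] × ⋯ × [n]` (1-indexed letters). -/
def IsWord (n : ℕ) (w : ℕ → ℕ) : Prop :=
  ∀ i, 1 ≤ i → i ≤ n → 1 ≤ w i ∧ w i ≤ i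

/-- `IsPermList n l` : `l` is the one-line notation of a permutation of `{1,…,n}`. -/
def IsPermList (n : ℕ) (l : List ℕ) : Prop :=
  l.Perm (List.range' 1 n)

/-- `f₁` : at step `k` insert the letter `k` at position `w k` from the right. -/
def f1List (n : ℕ) (w : ℕ → ℕ) : List ℕ :=
  (List.range n).foldl (fun L k => L.insertIdx (k + 1 - w (k + 1)) (k + 1)) []

/-- Auxiliary for `f₂`: entry at position `i` is the `w i`-th smallest available number. -/
def f2Go (w : ℕ → ℕ) : ℕ → List ℕ → List ℕ
  | 0, _ => []
  | i + 1, avail =>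
      let x := avail.getD (w (i + 1) - 1) 0
      f2Go w i (avail.erase x) ++ [x]

/-- `f₂` : the entry at position `i` is the `w i`-th smallest element of `{1,…,n}`
not occurring at positions `i+1,…,n`. -/
def f2List (n : ℕ) (w : ℕ → ℕ) : List ℕ :=
  f2Go w n (List.range' 1 n)

/-- `g₁` : at step `k` insert the letter `k` at position `w k` from the left. -/
def g1List (n : ℕ) (w : ℕ → ℕ) : List ℕ :=
  (List.range n).foldl (fun L k => L.insertIdx (w (k + 1) - 1) (k + 1)) []

/-- Auxiliary for `g₂`. -/
def g2Go (w : ℕ → ℕ) : ℕ → List ℕ → List ℕ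
  | 0, _ => []
  | j + 1, avail =>
      let x := avail.getD (w (j + 1) - 1) 0
      x :: g2Go w j (avail.erase x)

/-- `g₂` : the entry at position `i` is the `w (n+1-i)`-th smallest element of `{1,…,n}`
not occurring at positions `1,…,i-1`. -/
def g2List (n : ℕ) (w : ℕ → ℕ) : List ℕ :=
  g2Go w n (List.range' 1 n)

/-- Apply a single cycle, written as a list, to `x`. -/
def applyCycle (c : List ℕ) (x : ℕ) : ℕ :=
  if x ∈ c then c.getD ((c.idxOf x + 1) % c.length) x else x

/-- Apply a permutation given in cycle notation (a list of cycles) to `x`. -/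
def applyCycles (cs : List (List ℕ)) (x : ℕ) : ℕ :=
  match cs.find? (fun c => c.contains x) with
  | some c => applyCycle c x
  | none => x

/-- Auxiliary for `f₃`: arguments are the index being read, the closed cycles,
the current cycle, and the list of unused letters (sorted). -/
def f3Go (w : ℕ → ℕ) : ℕ → List (List ℕ) → List ℕ → List ℕ → List (List ℕ)
  | 0, done, cur, _ => done ++ [cur]
  | 1, done, cur, _ => done ++ [cur]
  | i + 2, done, cur, avail =>
      if w (i + 2) = 1 then
        f3Go w (i + 1) (done ++ [cur]) [avail.headD 0] avail.tail
      else
        let x := avail.getD (w (i + 2) - 2) 0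
        f3Go w (i + 1) done (cur ++ [x]) (avail.erase x)

/-- `f₃` in cycle notation: reading `w` from position `n` down to `2`, if `w i > 1`
append the `(w i - 1)`-th smallest unused letter of `{2,…,n}` to the current cycle,
and if `w i = 1` close the current cycle and start a new one with the smallest
unused letter.  The first cycle starts with `1`. -/
def f3Cycles (n : ℕ) (w : ℕ → ℕ) : List (List ℕ) :=
  f3Go w n [] [1] (List.range' 2 (n - 1))

/-- One-line notation of `f₃ w`. -/
def f3OneLine (n : ℕ) (w : ℕ → ℕ) : List ℕ :=
  (List.range' 1 n).map (applyCycles (f3Cycles n w))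

/-- `f₄` as a function: recursively, if `w (m+1) = 1` adjoin the fixed point `m+1`,
and if `w (m+1) = k > 1` insert `m+1` immediately after `k - 1` in its cycle. -/
def f4Fun (w : ℕ → ℕ) : ℕ → ℕ → ℕ
  | 0, x => x
  | m + 1, x =>
      if w (m + 1) = 1 then f4Fun w m x
      else if x = w (m + 1) - 1 then m + 1
      else if x = m + 1 then f4Fun w m (w (m + 1) - 1)
      else f4Fun w m x

/-- One-line notation of `f₄ w`. -/
def f4OneLine (n : ℕ) (w : ℕ → ℕ) : List ℕ :=
  (List.range' 1 n).map (f4Fun w n)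

/-- One-line notation of the inverse of the permutation with one-line notation `l`. -/
def invList (n : ℕ) (l : List ℕ) : List ℕ :=
  (List.range' 1 n).map (fun k => l.idxOf k + 1)

/-- The permutation (as a function) with one-line notation `l`. -/
def permOf (l : List ℕ) (k : ℕ) : ℕ := l.getD (k - 1) 0

/-- The forward orbit of `x` under `σ`. -/
def orbitOf (σ : ℕ → ℕ) (x : ℕ) : Set ℕ := {y | ∃ m, σ^[m] x = y}

/-- The number of orbits of `σ` on `{1,…,n}`. -/
noncomputable def numCycles (n : ℕ) (σ : ℕ → ℕ) : ℕ :=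
  {s : Set ℕ | ∃ x, 1 ≤ x ∧ x ≤ n ∧ s = orbitOf σ x}.ncard

section Aux

lemma insertIdx_len_append (l1 l2 : List ℕ) (y : ℕ) :
    (l1 ++ l2).insertIdx l1.length y = l1 ++ y :: l2 := by
  induction l1 with
  | nil => simp
  | cons a t ih => simp [List.insertIdx_succ_cons, ih]

lemma insertIdx_eq_of_len (l1 l2 : List ℕ) (j y : ℕ) (h : l1.length = j) :
    (l1 ++ l2).insertIdx j y = l1 ++ y :: l2 := by
  subst h; exact insertIdx_len_append l1 l2 y

lemma insertIdx_length_self (l : List ℕ) (x : ℕ) :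
    l.insertIdx l.length x = l ++ [x] := by
  simpa using insertIdx_len_append l [] x

lemma insertIdx_append_of_le (M : List ℕ) (x : ℕ) :
    ∀ (j : ℕ) (L : List ℕ), j ≤ L.length →
      (L ++ M).insertIdx j x = L.insertIdx j x ++ M := by
  intro j
  induction j with
  | zero => intro L _; simp
  | succ j ih =>
    intro L hL
    match L with
    | a :: L =>
      simp only [List.cons_append, List.insertIdx_succ_cons]
      rw [ih L (by simpa using hL)]

lemma reverse_insertIdx (x : ℕ) :
    ∀ (l : List ℕ) (i : ℕ), i ≤ l.length →
      (l.insertIdx i x).reverse = l.reverse.insertIdx (l.length - i) x := by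
  intro l
  induction l with
  | nil =>
    intro i hi
    have : i = 0 := by simp at hi; omega
    subst this; simp
  | cons a t ih =>
    intro i hi
    match i with
    | 0 =>
      rw [List.insertIdx_zero, List.reverse_cons,
        show (a :: t).length - 0 = ((a :: t).reverse).length by simp,
        insertIdx_length_self]
    | j + 1 =>
      have hj : j ≤ t.length := by simpa using hi
      simp only [List.insertIdx_succ_cons, List.reverse_cons, List.length_cons,
        Nat.succ_sub_succ]
      rw [ih j hj, insertIdx_append_of_le _ _ _ _ (by simp)]

lemma f2Go_perm (w : ℕ → ℕ) :
    ∀ (i : ℕ) (A : List ℕ), A.length = i →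
      (∀ j, 1 ≤ j → j ≤ i → 1 ≤ w j ∧ w j ≤ j) → (f2Go w i A).Perm A := by
  intro i
  induction i with
  | zero =>
    intro A hA _
    simp [f2Go, List.length_eq_zero_iff.mp hA]
  | succ n ih =>
    intro A hA hw
    obtain ⟨hm1, hm2⟩ := hw (n + 1) (by omega) le_rfl
    have hidx : w (n + 1) - 1 < A.length := by omega
    set x := A.getD (w (n + 1) - 1) 0 with hxdef
    have hxA : x ∈ A := by
      rw [hxdef, List.getD_eq_getElem _ _ hidx]
      exact List.getElem_mem hidx
    have hstep : f2Go w (n + 1) A = f2Go w n (A.erase x) ++ [x] := rfl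
    rw [hstep]
    have hlen : (A.erase x).length = n := by
      rw [List.length_erase_of_mem hxA, hA]
      omega
    have h1 := ih (A.erase x) hlen (fun j h1 h2 => hw j h1 (by omega))
    refine (h1.append_right [x]).trans ?_
    exact (List.perm_append_singleton x (A.erase x)).trans
      (List.perm_cons_erase hxA).symm

lemma f1List_length (w : ℕ → ℕ) :
    ∀ n, (∀ j, 1 ≤ j → j ≤ n → 1 ≤ w j ∧ w j ≤ j) → (f1List n w).length = n := by
  intro n
  induction n with
  | zero => intro _; rfl
  | succ n ih =>
    intro hw
    have hstep : f1List (n + 1) w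
        = (f1List n w).insertIdx (n + 1 - w (n + 1)) (n + 1) := by
      unfold f1List
      rw [List.range_succ, List.foldl_append]
      rfl
    obtain ⟨hm1, hm2⟩ := hw (n + 1) (by omega) le_rfl
    have hlen := ih (fun j h1 h2 => hw j h1 (by omega))
    rw [hstep, List.length_insertIdx_of_le_length (by omega), hlen]

lemma main_lemma (w : ℕ → ℕ) :
    ∀ (n : ℕ) (A : List ℕ), A.length = n → A.Nodup →
      (∀ j, 1 ≤ j → j ≤ n → 1 ≤ w j ∧ w j ≤ j) →
      (f1List n w).reverse = A.map (fun k => (f2Go w n A).idxOf k + 1) := by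
  intro n
  induction n with
  | zero =>
    intro A hA _ _
    simp [f1List, List.length_eq_zero_iff.mp hA]
  | succ n ih =>
    intro A hA hnd hw
    obtain ⟨hm1, hm2⟩ := hw (n + 1) (by omega) le_rfl
    set m := w (n + 1) with hmdef
    have hidx : m - 1 < A.length := by omega
    set x := A.getD (m - 1) 0 with hxdef
    have hxget : x = A[m - 1] := by rw [hxdef, List.getD_eq_getElem _ _ hidx]
    have hxA : x ∈ A := hxget ▸ List.getElem_mem hidx
    have hidxOf : A.idxOf x = m - 1 := by
      rw [hxget]; exact hnd.idxOf_getElem _ hidx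
    have herase : A.erase x = A.take (m - 1) ++ A.drop m := by
      rw [← List.eraseIdx_idxOf_eq_erase, hidxOf, List.eraseIdx_eq_take_drop_succ]
      congr 2
      omega
    have hdecomp : A = A.take (m - 1) ++ x :: A.drop m := by
      conv_lhs => rw [← List.take_append_drop (m - 1) A]
      congr 1
      rw [List.drop_eq_getElem_cons hidx, ← hxget]
      congr 2
      omega
    set τ := f2Go w n (A.erase x) with hτdef
    have hstep2 : f2Go w (n + 1) A = τ ++ [x] := rfl
    have hlenerase : (A.erase x).length = n := by
      rw [List.length_erase_of_mem hxA, hA]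
      omega
    have hτperm : τ.Perm (A.erase x) :=
      f2Go_perm w n (A.erase x) hlenerase (fun j h1 h2 => hw j h1 (by omega))
    have hxτ : x ∉ τ := fun h => (hnd.not_mem_erase) (hτperm.mem_iff.mp h)
    have hτlen : τ.length = n := hτperm.length_eq.trans hlenerase
    have hfx : (f2Go w (n + 1) A).idxOf x + 1 = n + 1 := by
      rw [hstep2, List.idxOf_append_of_notMem hxτ]
      simp [hτlen]
    have hother : ∀ k ∈ A.erase x,
        (f2Go w (n + 1) A).idxOf k + 1 = τ.idxOf k + 1 := by
      intro k hk
      rw [hstep2, List.idxOf_append_of_mem (hτperm.mem_iff.mpr hk)]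
    have htakemem : ∀ k ∈ A.take (m - 1), k ∈ A.erase x := by
      intro k hk; rw [herase]; exact List.mem_append_left _ hk
    have hdropmem : ∀ k ∈ A.drop m, k ∈ A.erase x := by
      intro k hk; rw [herase]; exact List.mem_append_right _ hk
    have hlt : ((A.take (m - 1)).map (fun k => τ.idxOf k + 1)).length = m - 1 := by
      rw [List.length_map, List.length_take]
      omega
    have h1 : A.map (fun k => (f2Go w (n + 1) A).idxOf k + 1)
        = (A.take (m - 1) ++ x :: A.drop m).map
            (fun k => (f2Go w (n + 1) A).idxOf k + 1) := by
      rw [← hdecomp]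
    have hRHS : A.map (fun k => (f2Go w (n + 1) A).idxOf k + 1)
        = ((A.erase x).map (fun k => τ.idxOf k + 1)).insertIdx (m - 1) (n + 1) := by
      rw [h1, List.map_append, List.map_cons, hfx, herase, List.map_append,
        insertIdx_eq_of_len _ _ _ _ hlt]
      congr 1
      · exact List.map_congr_left (fun k hk => hother k (htakemem k hk))
      · congr 1
        exact List.map_congr_left (fun k hk => hother k (hdropmem k hk))
    have hstep1 : f1List (n + 1) w
        = (f1List n w).insertIdx (n + 1 - m) (n + 1) := by
      unfold f1List
      rw [List.range_succ, List.foldl_append]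
      rfl
    have hw' : ∀ j, 1 ≤ j → j ≤ n → 1 ≤ w j ∧ w j ≤ j :=
      fun j h1 h2 => hw j h1 (by omega)
    have hf1len : (f1List n w).length = n := f1List_length w n hw'
    have hih := ih (A.erase x) hlenerase (hnd.erase x) hw'
    rw [hstep1, reverse_insertIdx _ _ _ (by omega), hf1len,
      show n - (n + 1 - m) = m - 1 by omega, hih, hRHS]

end Aux

/-- For `Φ = f₁ ∘ f₂⁻¹ : S_n → S_n`: for every permutation `σ` (with preimage word
`w = f₂⁻¹ σ`), the reverse of `Φ σ` is the one-line notation of `σ⁻¹`. -/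
theorem phi_eq_reverse_inverse (n : ℕ) (σ : List ℕ) (hσ : IsPermList n σ)
    (w : ℕ → ℕ) (hw : IsWord n w) (hfw : f2List n w = σ) :
    (f1List n w).reverse = invList n σ := by
  subst hfw
  unfold invList f2List
  exact main_lemma w n (List.range' 1 n) (by simp) (List.nodup_range' (s := 1) (n := n))
    (fun j h1 h2 => hw j h1 h2)
end

section
/- The map f₃ : W_n → S_n is a bijection, where f₃(w) is the permutation built in cycle notation by: start the current cycle with 1; reading w from position n down to position 2, if w[i] > 1 insert the (w[i]−1)-th smallest letter of {2,…,n} not yet used at the end of the current cycle, and if w[i] = 1 close the current cycle and start a new cycle whose first element is the smallest unused letter; finally close the last cycle. -/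
/-!
Running `f3Go`, the letters placed so far together with the unused ones always form `{1,…,n}`,
and since every new cycle starts with the least unused letter, the output is cycle notation in
standard form. Such cycle notation is determined by the permutation it denotes (each cycle is the
orbit of its first entry, and the first entry is the least letter not yet covered), and the word
can be read back from it step by step: a letter `w i = 1` closes the current cycle, otherwise the
appended letter has rank `w i - 1` among the unused ones. Hence `f₃` is injective, and
`|W_n| = n! = |S_n|` makes it bijective.
-/

lemma applyCycle_getElem {l : List ℕ} (hnd : l.Nodup) (j : ℕ) (hj : j < l.length) :
    applyCycle l l[j] = l[(j + 1) % l.length]'(Nat.mod_lt _ (by omega)) := by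
  rw [applyCycle, if_pos (List.getElem_mem hj), hnd.idxOf_getElem j hj, List.getD_eq_getElem]

lemma map_applyCycle_eq_rotate {l : List ℕ} (hnd : l.Nodup) : l.map (applyCycle l) = l.rotate 1 :=
  List.ext_getElem (by simp) fun j hj _ => by
    rw [List.getElem_map, applyCycle_getElem hnd j (by simpa using hj), List.getElem_rotate]

lemma iterate_getElem_zero {l : List ℕ} (hnd : l.Nodup) {σ : ℕ → ℕ}
    (hσ : ∀ x ∈ l, σ x = applyCycle l x) (h0 : 0 < l.length) (j : ℕ) :
    σ^[j] l[0] = l[j % l.length]'(Nat.mod_lt _ h0) := by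
  induction j with
  | zero => simp
  | succ j ih =>
    rw [Function.iterate_succ_apply', ih, hσ _ (List.getElem_mem _), applyCycle_getElem hnd]
    simp only [Nat.mod_add_mod]

lemma length_le_of_applyCycle_agree {l l' : List ℕ} (hnd : l.Nodup) (hnd' : l'.Nodup) {σ : ℕ → ℕ}
    (hσ : ∀ x ∈ l, σ x = applyCycle l x) (hσ' : ∀ x ∈ l', σ x = applyCycle l' x)
    (h0 : 0 < l.length) (h0' : 0 < l'.length) (hhead : l[0] = l'[0]) :
    l'.length ≤ l.length := by
  by_contra! hlt
  have h := iterate_getElem_zero hnd hσ h0 l.length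
  rw [hhead, iterate_getElem_zero hnd' hσ' h0'] at h
  simp only [Nat.mod_self, Nat.mod_eq_of_lt hlt] at h
  rw [hhead, hnd'.getElem_inj_iff] at h
  omega

lemma eq_of_applyCycle_agree {l l' : List ℕ} (hnd : l.Nodup) (hnd' : l'.Nodup) {σ : ℕ → ℕ}
    (hσ : ∀ x ∈ l, σ x = applyCycle l x) (hσ' : ∀ x ∈ l', σ x = applyCycle l' x)
    (h0 : 0 < l.length) (h0' : 0 < l'.length) (hhead : l[0] = l'[0]) : l = l' := by
  have hlen := le_antisymm (length_le_of_applyCycle_agree hnd' hnd hσ' hσ h0' h0 hhead.symm)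
    (length_le_of_applyCycle_agree hnd hnd' hσ hσ' h0 h0' hhead)
  refine List.ext_getElem hlen fun j hj hj' => ?_
  have h := iterate_getElem_zero hnd hσ h0 j
  rw [hhead, iterate_getElem_zero hnd' hσ' h0'] at h
  simpa [Nat.mod_eq_of_lt hj, Nat.mod_eq_of_lt hj'] using h.symm

lemma applyCycles_cons_of_mem {c : List ℕ} {x : ℕ} (cs : List (List ℕ)) (hx : x ∈ c) :
    applyCycles (c :: cs) x = applyCycle c x := by
  rw [applyCycles, List.find?_cons_of_pos (p := fun c : List ℕ => c.contains x) (by simpa using hx)]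

lemma applyCycles_cons_of_not_mem {c : List ℕ} {x : ℕ} (cs : List (List ℕ)) (hx : x ∉ c) :
    applyCycles (c :: cs) x = applyCycles cs x := by
  rw [applyCycles, applyCycles,
    List.find?_cons_of_neg (p := fun c : List ℕ => c.contains x) (by simpa using hx)]

lemma applyCycles_eq_of_mem {cs : List (List ℕ)} {c : List ℕ} {x : ℕ} (hnd : cs.flatten.Nodup)
    (hc : c ∈ cs) (hx : x ∈ c) : applyCycles cs x = applyCycle c x := by
  induction cs with
  | nil => simp at hc
  | cons c₀ cs ih =>
    rw [List.flatten_cons, List.nodup_append] at hnd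
    rcases List.mem_cons.mp hc with rfl | hc
    · exact applyCycles_cons_of_mem cs hx
    · have hx₀ : x ∉ c₀ := fun hx₀ => hnd.2.2 x hx₀ x (List.mem_flatten_of_mem hc hx) rfl
      rw [applyCycles_cons_of_not_mem cs hx₀, ih hnd.2.1 hc]

lemma map_applyCycles_flatten_perm {cs : List (List ℕ)} (hnd : cs.flatten.Nodup) :
    (cs.flatten.map (applyCycles cs)).Perm cs.flatten := by
  have hrot : ∀ c ∈ cs, c.map (applyCycles cs) = c.rotate 1 := fun c hc => by
    rw [List.map_congr_left fun x hx => applyCycles_eq_of_mem hnd hc hx,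
      map_applyCycle_eq_rotate (List.nodup_flatten.mp hnd |>.1 c hc)]
  rw [List.map_flatten, List.map_congr_left hrot, ← List.flatMap_def, ← List.flatMap_id']
  exact List.Perm.flatMap_left cs fun c _ => List.rotate_perm c 1

/-- Standard form of cycle notation: every cycle starts with its least element, and the cycles
are listed by increasing first element. -/
def IsStandardForm : List (List ℕ) → Prop
  | [] => True
  | c :: cs => (∃ h t, c = h :: t ∧ ∀ x ∈ t ++ cs.flatten, h < x) ∧ IsStandardForm cs

lemma IsStandardForm.head_le {h : ℕ} {t : List ℕ} {cs : List (List ℕ)}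
    (hs : IsStandardForm ((h :: t) :: cs)) {x : ℕ} (hx : x ∈ ((h :: t) :: cs).flatten) : h ≤ x := by
  obtain ⟨⟨h', t', heq, hlt⟩, -⟩ := hs
  obtain ⟨rfl, rfl⟩ := List.cons_eq_cons.mp heq
  rw [List.flatten_cons, List.cons_append, List.mem_cons] at hx
  rcases hx with rfl | hx
  · exact le_rfl
  · exact (hlt x hx).le

theorem IsStandardForm.eq_of_applyCycles_eq {cs cs' : List (List ℕ)} (hs : IsStandardForm cs)
    (hs' : IsStandardForm cs') (hnd : cs.flatten.Nodup) (hperm : cs.flatten.Perm cs'.flatten)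
    (hagree : ∀ x ∈ cs.flatten, applyCycles cs x = applyCycles cs' x) : cs = cs' := by
  induction cs generalizing cs' with
  | nil =>
    cases cs' with
    | nil => rfl
    | cons c' cs' =>
      obtain ⟨⟨h', t', rfl, -⟩, -⟩ := hs'
      simpa using hperm.symm.subset (List.mem_flatten_of_mem List.mem_cons_self List.mem_cons_self)
  | cons c cs ih =>
    obtain ⟨⟨h, t, rfl, -⟩, hsr⟩ := id hs
    cases cs' with
    | nil => simpa using hperm.subset (List.mem_flatten_of_mem List.mem_cons_self List.mem_cons_self)
    | cons c' cs' =>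
      obtain ⟨⟨h', t', rfl, -⟩, hsr'⟩ := id hs'
      have hh : h = h' := le_antisymm (hs.head_le (hperm.mem_iff.mpr (by simp)))
        (hs'.head_le (hperm.mem_iff.mp (by simp)))
      subst hh
      have hnd' : (((h :: t') :: cs').flatten).Nodup := hperm.nodup_iff.mp hnd
      rw [List.flatten_cons, List.nodup_append] at hnd hnd'
      obtain rfl : t = t' := List.cons_injective <| by
        refine eq_of_applyCycle_agree hnd.1 hnd'.1 (σ := applyCycles ((h :: t) :: cs))
          (fun x hx => applyCycles_cons_of_mem cs hx) (fun x hx => ?_) (by simp) (by simp) rfl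
        rw [hagree x (hperm.mem_iff.mpr (List.mem_flatten_of_mem List.mem_cons_self hx)),
          applyCycles_cons_of_mem cs' hx]
      rw [List.flatten_cons, List.flatten_cons, List.perm_append_left_iff] at hperm
      congr 1
      refine ih hsr hsr' hnd.2.1 hperm fun x hx => ?_
      have hxc : x ∉ h :: t := fun hxc => hnd.2.2 x hxc x hx rfl
      have hxc' : x ∉ h :: t := fun hxc => hnd'.2.2 x hxc x (hperm.subset hx) rfl
      rw [← applyCycles_cons_of_not_mem cs hxc, ← applyCycles_cons_of_not_mem cs' hxc']
      exact hagree x (List.mem_append_right _ hx)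

lemma IsWord.mono {m n : ℕ} {w : ℕ → ℕ} (hw : IsWord n w) (hmn : m ≤ n) : IsWord m w :=
  fun i hi him => hw i hi (him.trans hmn)

section f3Go

variable {w : ℕ → ℕ}

lemma f3Go_eq_append (i : ℕ) (done : List (List ℕ)) (cur avail : List ℕ) :
    f3Go w i done cur avail = done ++ f3Go w i [] cur avail := by
  induction i using Nat.twoStepInduction generalizing done cur avail with
  | zero | one => simp [f3Go]
  | more i _ ih =>
    rw [f3Go, f3Go]
    split
    · rw [ih (done ++ [cur]), ih ([] ++ [cur])]
      simp
    · exact ih ..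

lemma f3Go_of_eq_one {i : ℕ} (h : w (i + 2) = 1) (cur avail : List ℕ) :
    f3Go w (i + 2) [] cur avail = cur :: f3Go w (i + 1) [] [avail.headD 0] avail.tail := by
  rw [f3Go, if_pos h, f3Go_eq_append]
  rfl

lemma f3Go_of_ne_one {i : ℕ} (h : w (i + 2) ≠ 1) (cur avail : List ℕ) :
    f3Go w (i + 2) [] cur avail = f3Go w (i + 1) [] (cur ++ [avail.getD (w (i + 2) - 2) 0])
      (avail.erase (avail.getD (w (i + 2) - 2) 0)) := by
  rw [f3Go, if_neg h]

lemma exists_f3Go_eq_cons (i : ℕ) (cur avail : List ℕ) :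
    ∃ t cs, f3Go w i [] cur avail = (cur ++ t) :: cs := by
  induction i using Nat.twoStepInduction generalizing cur avail with
  | zero | one => exact ⟨[], [], by simp [f3Go]⟩
  | more i _ ih =>
    by_cases h : w (i + 2) = 1
    · exact ⟨[], _, by rw [f3Go_of_eq_one h, List.append_nil]⟩
    · obtain ⟨t, cs, heq⟩ := ih (cur ++ [avail.getD (w (i + 2) - 2) 0]) _
      exact ⟨_ :: t, cs, by rw [f3Go_of_ne_one h, heq, List.append_assoc, List.singleton_append]⟩

lemma IsWord.getD_sub_two_mem {i : ℕ} (hw : IsWord (i + 2) w) {avail : List ℕ}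
    (hlen : avail.length = i + 1) : avail.getD (w (i + 2) - 2) 0 ∈ avail := by
  have := hw (i + 2) (by omega) le_rfl
  rw [List.getD_eq_getElem _ _ (by omega)]
  exact List.getElem_mem _

lemma f3Go_flatten_perm {i : ℕ} (hw : IsWord i w) (cur : List ℕ) {avail : List ℕ}
    (hlen : avail.length = i - 1) : (f3Go w i [] cur avail).flatten.Perm (cur ++ avail) := by
  induction i using Nat.twoStepInduction generalizing cur avail with
  | zero | one => simp [f3Go, List.length_eq_zero_iff.mp hlen]
  | more i _ ih =>
    by_cases h : w (i + 2) = 1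
    · obtain ⟨a, as, rfl⟩ := List.exists_cons_of_length_eq_add_one hlen
      rw [f3Go_of_eq_one h, List.flatten_cons]
      exact (ih (hw.mono (by omega)) [a] (by simpa using hlen)).append_left cur
    · have hx := hw.getD_sub_two_mem hlen
      rw [f3Go_of_ne_one h]
      refine (ih (hw.mono (by omega)) _ (by rw [List.length_erase_of_mem hx]; omega)).trans ?_
      simpa using (List.perm_cons_erase hx).symm.append_left cur

lemma isStandardForm_f3Go {i : ℕ} (hw : IsWord i w) {h : ℕ} {t avail : List ℕ}
    (hlen : avail.length = i - 1) (hsort : avail.Pairwise (· < ·)) (hlt : ∀ x ∈ t ++ avail, h < x) :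
    IsStandardForm (f3Go w i [] (h :: t) avail) := by
  induction i using Nat.twoStepInduction generalizing h t avail with
  | zero | one =>
    simp only [f3Go, List.nil_append, List.length_eq_zero_iff.mp hlen] at hlt ⊢
    exact ⟨⟨h, t, rfl, by simpa using hlt⟩, trivial⟩
  | more i _ ih =>
    by_cases hw1 : w (i + 2) = 1
    · obtain ⟨a, as, rfl⟩ := List.exists_cons_of_length_eq_add_one hlen
      rw [f3Go_of_eq_one hw1, List.headD_cons, List.tail_cons]
      refine ⟨⟨h, t, rfl, fun x hx => hlt x ?_⟩, ih (hw.mono (by omega)) (by simpa using hlen)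
        hsort.of_cons (List.pairwise_cons.mp hsort).1⟩
      rw [List.mem_append, (f3Go_flatten_perm (hw.mono (by omega)) [a]
        (by simpa using hlen)).mem_iff] at hx
      simpa using hx
    · have hx := hw.getD_sub_two_mem hlen
      rw [f3Go_of_ne_one hw1, List.cons_append]
      refine ih (hw.mono (by omega)) (by rw [List.length_erase_of_mem hx]; omega)
        (hsort.erase _) fun y hy => hlt y ?_
      simp only [List.mem_append, List.mem_singleton] at hy ⊢
      rcases hy with (hy | rfl) | hy
      exacts [.inl hy, .inr hx, .inr (List.mem_of_mem_erase hy)]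

lemma exists_headD_f3Go_of_ne_one {i : ℕ} (h : w (i + 2) ≠ 1) (cur avail : List ℕ) :
    ∃ t, (f3Go w (i + 2) [] cur avail).headD [] = cur ++ avail.getD (w (i + 2) - 2) 0 :: t := by
  obtain ⟨t, cs, heq⟩ := exists_f3Go_eq_cons (w := w) (i + 1) (cur ++ [avail.getD (w (i + 2) - 2) 0])
    (avail.erase (avail.getD (w (i + 2) - 2) 0))
  exact ⟨t, by rw [f3Go_of_ne_one h, heq]; simp⟩

/-- The first cycle of the output shows whether the step closed the current cycle and, if not,
which letter it appended. -/
lemma f3Go_step_injective {v : ℕ → ℕ} {i : ℕ} (hw : IsWord (i + 2) w) (hv : IsWord (i + 2) v)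
    {cur avail : List ℕ} (hnd : avail.Nodup) (hlen : avail.length = i + 1)
    (heq : f3Go w (i + 2) [] cur avail = f3Go v (i + 2) [] cur avail) :
    w (i + 2) = v (i + 2) ∧ ∃ cur' avail', avail'.Nodup ∧ avail'.length = i ∧
      f3Go w (i + 1) [] cur' avail' = f3Go v (i + 1) [] cur' avail' := by
  have hhead := congrArg (List.headD · []) heq
  by_cases hw1 : w (i + 2) = 1 <;> by_cases hv1 : v (i + 2) = 1
  · rw [f3Go_of_eq_one hw1, f3Go_of_eq_one hv1] at heq
    exact ⟨hw1.trans hv1.symm, _, _, hnd.sublist (List.tail_sublist _),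
      by rw [List.length_tail]; omega, List.cons_injective heq⟩
  · obtain ⟨t, ht⟩ := exists_headD_f3Go_of_ne_one hv1 cur avail
    rw [ht, f3Go_of_eq_one hw1] at hhead
    simp at hhead
  · obtain ⟨t, ht⟩ := exists_headD_f3Go_of_ne_one hw1 cur avail
    rw [ht, f3Go_of_eq_one hv1] at hhead
    simp at hhead
  · obtain ⟨t, ht⟩ := exists_headD_f3Go_of_ne_one hw1 cur avail
    obtain ⟨t', ht'⟩ := exists_headD_f3Go_of_ne_one hv1 cur avail
    rw [ht, ht', List.append_cancel_left_eq, List.cons_eq_cons] at hhead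
    have hwi := hw (i + 2) (by omega) le_rfl
    have hvi := hv (i + 2) (by omega) le_rfl
    have hx := hhead.1
    rw [List.getD_eq_getElem _ _ (by omega), List.getD_eq_getElem _ _ (by omega),
      hnd.getElem_inj_iff] at hx
    rw [f3Go_of_ne_one hw1, f3Go_of_ne_one hv1, hhead.1] at heq
    have hmem := hv.getD_sub_two_mem hlen
    exact ⟨by omega, _, _, hnd.erase _, by rw [List.length_erase_of_mem hmem]; omega, heq⟩

lemma eq_of_f3Go_eq {v : ℕ → ℕ} {i : ℕ} (hw : IsWord i w) (hv : IsWord i v) {cur avail : List ℕ}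
    (hnd : avail.Nodup) (hlen : avail.length = i - 1)
    (heq : f3Go w i [] cur avail = f3Go v i [] cur avail) : ∀ j, 1 ≤ j → j ≤ i → w j = v j := by
  induction i using Nat.twoStepInduction generalizing cur avail with
  | zero => intro j _ _; omega
  | one =>
    intro j h1 hj
    have := hw j h1 hj
    have := hv j h1 hj
    omega
  | more i _ ih =>
    obtain ⟨hlast, cur', avail', hnd', hlen', heq'⟩ := f3Go_step_injective hw hv hnd (by omega) heq
    intro j h1 hj
    rcases Nat.lt_or_ge j (i + 2) with hj' | hj'
    · exact ih (hw.mono (by omega)) (hv.mono (by omega)) hnd' hlen' heq' j h1 (by omega)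
    · rwa [show j = i + 2 by omega]

end f3Go

section f3Cycles

variable {n : ℕ} {w : ℕ → ℕ}

lemma range'_one_eq_cons (hn : 1 ≤ n) : List.range' 1 n = 1 :: List.range' 2 (n - 1) := by
  obtain ⟨m, rfl⟩ := Nat.exists_eq_add_of_le' hn
  rfl

lemma f3Cycles_flatten_perm (hn : 1 ≤ n) (hw : IsWord n w) :
    (f3Cycles n w).flatten.Perm (List.range' 1 n) := by
  rw [range'_one_eq_cons hn]
  exact f3Go_flatten_perm hw [1] (by simp)

lemma isStandardForm_f3Cycles (hw : IsWord n w) : IsStandardForm (f3Cycles n w) :=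
  isStandardForm_f3Go hw (by simp) List.pairwise_lt_range' fun x hx => by
    simp only [List.nil_append, List.mem_range'] at hx
    omega

lemma isPermList_f3OneLine (hw : IsWord n w) : IsPermList n (f3OneLine n w) := by
  rcases Nat.eq_zero_or_pos n with rfl | hn
  · simp [IsPermList, f3OneLine]
  have hperm := f3Cycles_flatten_perm hn hw
  have hnd := hperm.nodup_iff.mpr List.nodup_range'
  exact (hperm.symm.map _).trans ((map_applyCycles_flatten_perm hnd).trans hperm)

lemma f3Cycles_eq_of_f3OneLine_eq {v : ℕ → ℕ} (hn : 1 ≤ n) (hw : IsWord n w) (hv : IsWord n v)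
    (heq : f3OneLine n w = f3OneLine n v) : f3Cycles n w = f3Cycles n v := by
  have hperm := f3Cycles_flatten_perm hn hw
  refine (isStandardForm_f3Cycles hw).eq_of_applyCycles_eq (isStandardForm_f3Cycles hv)
    (hperm.nodup_iff.mpr List.nodup_range') (hperm.trans (f3Cycles_flatten_perm hn hv).symm)
    fun x hx => List.map_inj_left.mp heq x (hperm.subset hx)

lemma eq_of_f3Cycles_eq {v : ℕ → ℕ} (hw : IsWord n w) (hv : IsWord n v)
    (heq : f3Cycles n w = f3Cycles n v) : ∀ i, 1 ≤ i → i ≤ n → w i = v i :=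
  eq_of_f3Go_eq hw hv List.nodup_range' (by simp) heq

end f3Cycles

def wordOfFin {n : ℕ} (f : ∀ i : Fin n, Fin (i + 1)) (i : ℕ) : ℕ :=
  if h : i - 1 < n then f ⟨i - 1, h⟩ + 1 else 1

lemma isWord_wordOfFin {n : ℕ} (f : ∀ i : Fin n, Fin (i + 1)) : IsWord n (wordOfFin f) := by
  intro i h1 hi
  have : (f ⟨i - 1, by omega⟩ : ℕ) < i - 1 + 1 := (f _).isLt
  simp only [wordOfFin, dif_pos (show i - 1 < n by omega)]
  omega

lemma eq_of_wordOfFin_eq {n : ℕ} {f g : ∀ i : Fin n, Fin (i + 1)}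
    (h : ∀ i, 1 ≤ i → i ≤ n → wordOfFin f i = wordOfFin g i) : f = g := by
  funext i
  have := h (i + 1) (by omega) i.isLt
  simp only [wordOfFin, add_tsub_cancel_right, dif_pos i.isLt, add_left_inj] at this
  exact Fin.ext this

lemma card_pi_fin_succ (n : ℕ) : Fintype.card (∀ i : Fin n, Fin (i + 1)) = n.factorial := by
  simp only [Fintype.card_pi, Fintype.card_fin]
  exact (Fin.prod_univ_eq_prod_range (· + 1) n).trans (Finset.prod_range_add_one_eq_factorial n)

lemma card_toFinset_permutations_range' (n : ℕ) :
    (List.range' 1 n).permutations.toFinset.card = n.factorial := by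
  rw [List.toFinset_card_of_nodup (List.nodup_permutations _ List.nodup_range'),
    List.length_permutations, List.length_range']

theorem IsWord.exists_of_injective {n : ℕ} {F : (ℕ → ℕ) → List ℕ}
    (hperm : ∀ w, IsWord n w → IsPermList n (F w))
    (hinj : ∀ w v, IsWord n w → IsWord n v → F w = F v → ∀ i, 1 ≤ i → i ≤ n → w i = v i)
    {l : List ℕ} (hl : IsPermList n l) : ∃ w, IsWord n w ∧ F w = l := by
  obtain ⟨f, -, hf⟩ := Finset.surj_on_of_inj_on_of_card_le (s := Finset.univ)
    (t := (List.range' 1 n).permutations.toFinset) (fun f _ => F (wordOfFin f))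
    (fun f _ => List.mem_toFinset.mpr (List.mem_permutations.mpr (hperm _ (isWord_wordOfFin f))))
    (fun f g _ _ hfg => eq_of_wordOfFin_eq
      (hinj _ _ (isWord_wordOfFin f) (isWord_wordOfFin g) hfg))
    (by rw [card_toFinset_permutations_range', Finset.card_univ, card_pi_fin_succ])
    l (List.mem_toFinset.mpr (List.mem_permutations.mpr hl))
  exact ⟨wordOfFin f, isWord_wordOfFin f, hf.symm⟩

/-- `f₃ : W_n → S_n` (cycle notation, converted to one-line notation) is a bijection. -/
theorem f3_bijection (n : ℕ) :
    (∀ w, IsWord n w → IsPermList n (f3OneLine n w)) ∧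
    (∀ w v, IsWord n w → IsWord n v → f3OneLine n w = f3OneLine n v →
      ∀ i, 1 ≤ i → i ≤ n → w i = v i) ∧
    (∀ l, IsPermList n l → ∃ w, IsWord n w ∧ f3OneLine n w = l) := by
  have hinj : ∀ w v, IsWord n w → IsWord n v → f3OneLine n w = f3OneLine n v →
      ∀ i, 1 ≤ i → i ≤ n → w i = v i := fun w v hw hv heq i h1 hi =>
    eq_of_f3Cycles_eq hw hv (f3Cycles_eq_of_f3OneLine_eq (h1.trans hi) hw hv heq) i h1 hi
  exact ⟨fun _ => isPermList_f3OneLine, hinj,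
    fun _ => IsWord.exists_of_injective (fun _ => isPermList_f3OneLine) hinj⟩
end

section
/- For every σ ∈ S_n, the i-th letter of f₁⁻¹(σ) equals the position of i counted from the right among the entries 1,…,i of σ: formally, f₁⁻¹(σ)[i] = #{ j : σ[j] ≤ i and j ≥ pos_σ(i) }, where pos_σ(i) is the position of i in the one-line notation of σ. -/
/-!
Induction on `n`. Deleting the largest letter `n` from `σ` does not change, for `i < n`, the
letters `≤ i` to the right of `i`, so the formula gives the same letters below `n` for
`σ.erase n` as for `σ`. The last step of `f₁` then inserts `n` at position `w n` from the right, which is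
exactly where `n` sits in `σ`, because every letter of `σ` is `≤ n`.
-/

namespace List

variable {α : Type*} [DecidableEq α]

theorem filter_erase_of_eq_false {p : α → Bool} {b : α} (hb : p b = false) (l : List α) :
    (l.erase b).filter p = l.filter p := by
  rw [← erase_filter, erase_of_not_mem (by simp [hb])]

theorem filter_drop_idxOf_erase {p : α → Bool} {b x : α} (hb : p b = false) (hx : p x = true)
    (l : List α) :
    ((l.erase b).drop ((l.erase b).idxOf x)).filter p = (l.drop (l.idxOf x)).filter p := by
  have hxb : x ≠ b := by rintro rfl; simp [hb] at hx
  induction l with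
  | nil => simp
  | cons a t ih =>
    by_cases hab : a = b
    · subst hab
      simp [idxOf_cons_ne _ (Ne.symm hxb)]
    by_cases hax : a = x
    · subst hax
      simp [hab, filter_cons, filter_erase_of_eq_false hb]
    · simpa [hab, idxOf_cons_ne _ hax] using ih

theorem insertIdx_idxOf_erase {l : List α} {x : α} (hx : x ∈ l) :
    (l.erase x).insertIdx (l.idxOf x) x = l := by
  have hlt : l.idxOf x < l.length := idxOf_lt_length_iff.mpr hx
  conv_lhs => rw [erase_eq_eraseIdx_of_idxOf rfl]; arg 3; rw [← getElem_idxOf hlt]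
  exact insertIdx_eraseIdx_getElem hlt

end List

theorem f1List_succ (n : ℕ) (w : ℕ → ℕ) :
    f1List (n + 1) w = (f1List n w).insertIdx (n + 1 - w (n + 1)) (n + 1) := by
  simp [f1List, List.range_succ]

theorem f1List_congr {n : ℕ} {w w' : ℕ → ℕ} (h : ∀ i, 1 ≤ i → i ≤ n → w i = w' i) :
    f1List n w = f1List n w' := by
  induction n with
  | zero => rfl
  | succ n ih =>
    rw [f1List_succ, f1List_succ, h (n + 1) (Nat.le_add_left 1 n) le_rfl,
      ih fun i h1 h2 => h i h1 (h2.trans n.le_succ)]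

theorem IsPermList.mem_iff {n : ℕ} {σ : List ℕ} (hσ : IsPermList n σ) {x : ℕ} :
    x ∈ σ ↔ 1 ≤ x ∧ x ≤ n := by
  rw [List.Perm.mem_iff hσ, List.mem_range'_1]
  omega

def f1InvWord (σ : List ℕ) (i : ℕ) : ℕ :=
  ((σ.drop (σ.idxOf i)).filter (fun x => decide (x ≤ i))).length

theorem f1InvWord_erase_of_lt {σ : List ℕ} {i b : ℕ} (hib : i < b) :
    f1InvWord (σ.erase b) i = f1InvWord σ i := by
  unfold f1InvWord
  rw [List.filter_drop_idxOf_erase (by simpa using hib) (by simp)]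

theorem f1InvWord_of_forall_le {σ : List ℕ} {i : ℕ} (h : ∀ x ∈ σ, x ≤ i) :
    f1InvWord σ i = σ.length - σ.idxOf i := by
  unfold f1InvWord
  rw [List.filter_eq_self.mpr fun x hx => by simpa using h x (List.drop_subset _ _ hx),
    List.length_drop]

theorem one_le_f1InvWord {σ : List ℕ} {i : ℕ} (hi : i ∈ σ) : 1 ≤ f1InvWord σ i := by
  have hlt : σ.idxOf i < σ.length := List.idxOf_lt_length_iff.mpr hi
  have hhead : i ∈ σ.drop (σ.idxOf i) := by
    rw [List.drop_eq_getElem_cons hlt, List.getElem_idxOf hlt]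
    exact List.mem_cons_self
  exact List.length_pos_iff_exists_mem.mpr ⟨i, List.mem_filter.mpr ⟨hhead, by simp⟩⟩

theorem f1InvWord_le {σ : List ℕ} (hσ : σ.Nodup) (hpos : ∀ x ∈ σ, 1 ≤ x) (i : ℕ) :
    f1InvWord σ i ≤ i := by
  have hsub : (σ.filter (fun x => decide (x ≤ i))).Subperm (List.range' 1 i) :=
    (hσ.filter _).subperm fun x hx => by
      obtain ⟨hxσ, hxi⟩ := List.mem_filter.mp hx
      simp only [decide_eq_true_eq] at hxi
      exact List.mem_range'_1.mpr ⟨hpos x hxσ, by omega⟩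
  calc f1InvWord σ i ≤ (σ.filter (fun x => decide (x ≤ i))).length :=
        ((σ.drop_sublist _).filter _).length_le
    _ ≤ i := by simpa using hsub.length_le

theorem isWord_f1InvWord {n : ℕ} {σ : List ℕ} (hσ : IsPermList n σ) :
    IsWord n (f1InvWord σ) := by
  intro i h1 h2
  exact ⟨one_le_f1InvWord (hσ.mem_iff.mpr ⟨h1, h2⟩),
    f1InvWord_le (hσ.nodup_iff.mpr List.nodup_range') (fun x hx => (hσ.mem_iff.mp hx).1) i⟩

theorem f1List_f1InvWord {n : ℕ} {σ : List ℕ} (hσ : IsPermList n σ) :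
    f1List n (f1InvWord σ) = σ := by
  induction n generalizing σ with
  | zero => simp_all [IsPermList, f1List]
  | succ n ih =>
    have htop : n + 1 ∈ σ := hσ.mem_iff.mpr ⟨by omega, le_rfl⟩
    have herase : IsPermList n (σ.erase (n + 1)) := by
      have hnot : n + 1 ∉ List.range' 1 n := by simp [List.mem_range'_1]; omega
      simpa [IsPermList, List.range'_concat, Nat.add_comm 1 n, List.erase_append_right _ hnot]
        using hσ.erase (n + 1)
    have hidx : σ.idxOf (n + 1) < n + 1 := by
      simpa [hσ.length_eq] using List.idxOf_lt_length_iff.mpr htop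
    have hlast : f1InvWord σ (n + 1) = n + 1 - σ.idxOf (n + 1) := by
      rw [f1InvWord_of_forall_le fun x hx => (hσ.mem_iff.mp hx).2, hσ.length_eq,
        List.length_range']
    have hbelow : f1List n (f1InvWord σ) = f1List n (f1InvWord (σ.erase (n + 1))) :=
      f1List_congr fun i _ hi => (f1InvWord_erase_of_lt (by omega)).symm
    rw [f1List_succ, hlast, Nat.sub_sub_self hidx.le, hbelow, ih herase,
      List.insertIdx_idxOf_erase htop]

/-- Explicit inverse of `f₁`: the `i`-th letter of `f₁⁻¹ σ` is
`#{ j : σ[j] ≤ i ∧ j ≥ pos_σ(i) }`, the position of `i` from the right among the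
entries `1,…,i` of `σ`; this word lies in `W_n` and `f₁` maps it back to `σ`. -/
theorem f1_inv_formula (n : ℕ) (σ : List ℕ) (hσ : IsPermList n σ) :
    IsWord n (fun i =>
      ((σ.drop (σ.idxOf i)).filter (fun x => decide (x ≤ i))).length) ∧
    f1List n (fun i =>
      ((σ.drop (σ.idxOf i)).filter (fun x => decide (x ≤ i))).length) = σ :=
  ⟨isWord_f1InvWord hσ, f1List_f1InvWord hσ⟩
end
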